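/- arXiv:2306.12301 — 2 statements merged into one kernel-verified Lean document; each statement's English description precedes it below -/
import Mathlib

section
/- Let H, ρ, F be as in the twist map setting. Let g : ℝ → ℝ be continuous with g(x + 1) = g(x), whose graph is invariant under F (F maps the graph bijectively onto itself). Assume: (1) there is τ > 0 such that π₁F(x, r₂) - π₁F(x, r₁) ≥ τ(r₂ - r₁) whenever r₁ ≤ r₂; (2) there is c ∈ (0, 1] such that π₁F(y, g(y)) - π₁F(x, g(x)) ≥ c(y - x) whenever x ≤ y; (3) there exist integers p and q ≥ 1 such that π₁(F^q(x, g(x))) = x + p for every x ∈ ℝ. Then for every (x, r) with r ≠ g(x), one has π₁(F^q(x, r)) ≠ x + p. In other words, for each x the unique r solving π₁F^q(x, r) = x + p is r = g(x). -/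
open Real

/-- Partial derivative of `H` in the first variable. -/
noncomputable def D1 (H : ℝ → ℝ → ℝ) (x x' : ℝ) : ℝ := deriv (fun t => H t x') x

/-- Partial derivative of `H` in the second variable. -/
noncomputable def D2 (H : ℝ → ℝ → ℝ) (x x' : ℝ) : ℝ := deriv (fun t => H x t) x'

/-- Mixed second partial derivative `∂₁₂H` (first in the first variable, then in the
second variable). -/
noncomputable def D12 (H : ℝ → ℝ → ℝ) (x x' : ℝ) : ℝ := deriv (fun t => D1 H x t) x'

/-!
Let `f a = π₁F(a, g a)`; `f` is strictly increasing, and onto since `f^q = id + p`. As `∂₁₂H < 0`,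
the momentum `r = -∂₁H(x, x')` is strictly increasing in `x'`, so a point above the graph over `a`
is sent to the right of `f a`, say over `f u` with `u > a`. Since `∂₂H(x, x')` is strictly
decreasing in `x` (by symmetry of second derivatives), its new momentum `∂₂H(a, f u)` exceeds
`∂₂H(u, f u) = g (f u)`: it lands above the graph again. Symmetrically below the graph. Inductively
`π₁F^q(x, r)` lies strictly on the same side of `f^q x = x + p`; `cmp` tracks both sides at once.
-/

open Function

lemma cmp_trans_of_eq {α : Type*} [LinearOrder α] {a b c : α} {o : Ordering}
    (hab : cmp a b = o) (hbc : cmp b c = o) : cmp a c = o := by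
  cases o <;> simp only [cmp_eq_lt_iff, cmp_eq_eq_iff, cmp_eq_gt_iff] at hab hbc ⊢
  exacts [hab.trans hbc, hab.trans hbc, hbc.trans hab]

lemma Function.Surjective.of_iterate_add_one {α : Type*} {f : α → α} {n : ℕ}
    (h : Surjective f^[n + 1]) : Surjective f := by
  rw [iterate_succ'] at h
  exact h.of_comp

section Partials

variable {E : Type*} [NormedAddCommGroup E] [NormedSpace ℝ E]

lemma DifferentiableAt.hasDerivAt_comp_left {φ : ℝ × ℝ → E} {a b : ℝ}
    (h : DifferentiableAt ℝ φ (a, b)) :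
    HasDerivAt (fun t => φ (t, b)) (fderiv ℝ φ (a, b) (1, 0)) a :=
  h.hasFDerivAt.comp_hasDerivAt a ((hasDerivAt_id a).prodMk (hasDerivAt_const a b))

lemma DifferentiableAt.hasDerivAt_comp_right {φ : ℝ × ℝ → E} {a b : ℝ}
    (h : DifferentiableAt ℝ φ (a, b)) :
    HasDerivAt (fun t => φ (a, t)) (fderiv ℝ φ (a, b) (0, 1)) b :=
  h.hasFDerivAt.comp_hasDerivAt b ((hasDerivAt_const b a).prodMk (hasDerivAt_id b))

end Partials

section Generating

variable {H : ℝ → ℝ → ℝ}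

lemma strictAnti_D1 (htwist : ∀ x x', D12 H x x' < 0) (x : ℝ) : StrictAnti (D1 H x) :=
  strictAnti_of_deriv_neg (htwist x)

lemma D1_eq_fderiv (hH : Differentiable ℝ (uncurry H)) (a b : ℝ) :
    D1 H a b = fderiv ℝ (uncurry H) (a, b) (1, 0) :=
  (hH (a, b)).hasDerivAt_comp_left.deriv

lemma D2_eq_fderiv (hH : Differentiable ℝ (uncurry H)) (a b : ℝ) :
    D2 H a b = fderiv ℝ (uncurry H) (a, b) (0, 1) :=
  (hH (a, b)).hasDerivAt_comp_right.deriv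

lemma hasDerivAt_D2_left (hH : ContDiff ℝ 2 (uncurry H)) (a b : ℝ) :
    HasDerivAt (fun t => D2 H t b) (D12 H a b) a := by
  have hH₁ : Differentiable ℝ (uncurry H) := hH.differentiable (by norm_num)
  have hH₂ : DifferentiableAt ℝ (fderiv ℝ (uncurry H)) (a, b) :=
    ((hH.fderiv_right (m := 1) (by norm_num)).differentiable (by norm_num)) (a, b)
  have hD12 : D12 H a b = fderiv ℝ (fderiv ℝ (uncurry H)) (a, b) (0, 1) (1, 0) := by
    simp only [D12, D1_eq_fderiv hH₁]
    simpa using (hH₂.hasDerivAt_comp_right.clm_apply (hasDerivAt_const b ((1 : ℝ), (0 : ℝ)))).deriv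
  simp only [D2_eq_fderiv hH₁, hD12,
    ← hH.contDiffAt.isSymmSndFDerivAt (by norm_num) ((1 : ℝ), (0 : ℝ)) ((0 : ℝ), (1 : ℝ))]
  simpa using hH₂.hasDerivAt_comp_left.clm_apply (hasDerivAt_const a ((0 : ℝ), (1 : ℝ)))

lemma strictAnti_D2_left (hH : ContDiff ℝ 2 (uncurry H)) (htwist : ∀ x x', D12 H x x' < 0)
    (b : ℝ) : StrictAnti fun t => D2 H t b :=
  strictAnti_of_deriv_neg fun a => (hasDerivAt_D2_left hH a b).deriv ▸ htwist a b

end Generating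

section TwistMap

variable {H : ℝ → ℝ → ℝ} {F : ℝ × ℝ → ℝ × ℝ} {g : ℝ → ℝ}

def IsGeneratingFunction (H : ℝ → ℝ → ℝ) (F : ℝ × ℝ → ℝ × ℝ) : Prop :=
  ∀ x r x' r', F (x, r) = (x', r') ↔ (r = -D1 H x x' ∧ r' = D2 H x x')

lemma eq_neg_D1_fst (hF : IsGeneratingFunction H F) (z : ℝ × ℝ) : z.2 = -D1 H z.1 (F z).1 :=
  ((hF z.1 z.2 _ _).mp rfl).1

lemma snd_eq_D2 (hF : IsGeneratingFunction H F) (z : ℝ × ℝ) : (F z).2 = D2 H z.1 (F z).1 :=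
  ((hF z.1 z.2 _ _).mp rfl).2

lemma strictMono_fst_apply (hF : IsGeneratingFunction H F) (htwist : ∀ x x', D12 H x x' < 0) (x : ℝ) :
    StrictMono fun r => (F (x, r)).1 := by
  intro r₁ r₂ h
  have h₁ : r₁ = -D1 H x (F (x, r₁)).1 := eq_neg_D1_fst hF (x, r₁)
  have h₂ : r₂ = -D1 H x (F (x, r₂)).1 := eq_neg_D1_fst hF (x, r₂)
  rw [h₁, h₂] at h
  exact (strictAnti_D1 htwist x).lt_iff_gt.mp (neg_lt_neg_iff.mp h)

def graphMap (F : ℝ × ℝ → ℝ × ℝ) (g : ℝ → ℝ) (x : ℝ) : ℝ := (F (x, g x)).1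

lemma iterate_apply_graph (hinv : Set.MapsTo F {z | z.2 = g z.1} {z | z.2 = g z.1}) (x : ℝ)
    (n : ℕ) : F^[n] (x, g x) = ((graphMap F g)^[n] x, g ((graphMap F g)^[n] x)) := by
  induction n with
  | zero => rfl
  | succ n ih =>
    rw [iterate_succ_apply', iterate_succ_apply', ih]
    exact Prod.ext rfl (hinv (show (_, _) ∈ {z : ℝ × ℝ | z.2 = g z.1} from rfl))

lemma graphMap_strictMono {c : ℝ} (hc : 0 < c)
    (hexp : ∀ x y, x ≤ y → c * (y - x) ≤ (F (y, g y)).1 - (F (x, g x)).1) :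
    StrictMono (graphMap F g) := fun x y h => by
  unfold graphMap
  linarith [hexp x y h.le, mul_pos hc (sub_pos.2 h)]

lemma cmp_graphMap_fst (hF : IsGeneratingFunction H F) (htwist : ∀ x x', D12 H x x' < 0)
    (z : ℝ × ℝ) :
    cmp (graphMap F g z.1) (F z).1 = cmp (g z.1) z.2 :=
  (strictMono_fst_apply hF htwist z.1).cmp_map_eq _ _

lemma cmp_snd_apply (hH : ContDiff ℝ 2 (uncurry H)) (hF : IsGeneratingFunction H F)
    (htwist : ∀ x x', D12 H x x' < 0) (hinv : Set.MapsTo F {z | z.2 = g z.1} {z | z.2 = g z.1})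
    (hf : StrictMono (graphMap F g)) (hsurj : Surjective (graphMap F g)) (z : ℝ × ℝ) :
    cmp (g (F z).1) (F z).2 = cmp (g z.1) z.2 := by
  obtain ⟨u, hu⟩ := hsurj (F z).1
  have hgu : g (F z).1 = D2 H u (F z).1 := by
    rw [← hu]
    exact (hinv (show (u, g u) ∈ {z : ℝ × ℝ | z.2 = g z.1} from rfl)).symm.trans
      (snd_eq_D2 hF (u, g u))
  rw [hgu, snd_eq_D2 hF z, (strictAnti_D2_left hH htwist _).cmp_map_eq, ← hf.cmp_map_eq, hu,
    cmp_graphMap_fst hF htwist]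

lemma cmp_snd_iterate (hH : ContDiff ℝ 2 (uncurry H)) (hF : IsGeneratingFunction H F)
    (htwist : ∀ x x', D12 H x x' < 0) (hinv : Set.MapsTo F {z | z.2 = g z.1} {z | z.2 = g z.1})
    (hf : StrictMono (graphMap F g)) (hsurj : Surjective (graphMap F g)) (z : ℝ × ℝ) (n : ℕ) :
    cmp (g (F^[n] z).1) (F^[n] z).2 = cmp (g z.1) z.2 := by
  induction n with
  | zero => rfl
  | succ n ih => rw [iterate_succ_apply', cmp_snd_apply hH hF htwist hinv hf hsurj, ih]

lemma cmp_graphMap_iterate (hH : ContDiff ℝ 2 (uncurry H)) (hF : IsGeneratingFunction H F)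
    (htwist : ∀ x x', D12 H x x' < 0) (hinv : Set.MapsTo F {z | z.2 = g z.1} {z | z.2 = g z.1})
    (hf : StrictMono (graphMap F g)) (hsurj : Surjective (graphMap F g)) (z : ℝ × ℝ) (n : ℕ) :
    cmp ((graphMap F g)^[n + 1] z.1) (F^[n + 1] z).1 = cmp (g z.1) z.2 := by
  induction n with
  | zero => exact cmp_graphMap_fst hF htwist z
  | succ n ih =>
    rw [iterate_succ_apply' (graphMap F g), iterate_succ_apply' F]
    refine cmp_trans_of_eq (b := graphMap F g (F^[n + 1] z).1) (by rwa [hf.cmp_map_eq]) ?_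
    rw [cmp_graphMap_fst hF htwist, cmp_snd_iterate hH hF htwist hinv hf hsurj]

end TwistMap

theorem stmt9_general (H : ℝ → ℝ → ℝ) (ρ : ℝ) (F : ℝ × ℝ → ℝ × ℝ)
    (hH : ContDiff ℝ 2 (Function.uncurry H))
    (hρ : 0 < ρ) (htwist : ∀ x x', D12 H x x' ≤ -ρ)
    (hFdef : ∀ x r x' r', F (x, r) = (x', r') ↔ (r = -D1 H x x' ∧ r' = D2 H x x'))
    (g : ℝ → ℝ)
    (hinv : Set.BijOn F {p : ℝ × ℝ | p.2 = g p.1} {p : ℝ × ℝ | p.2 = g p.1})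
    (c : ℝ) (hc0 : 0 < c)
    (hexp : ∀ x y : ℝ, x ≤ y → c * (y - x) ≤ (F (y, g y)).1 - (F (x, g x)).1)
    (p : ℤ) (q : ℕ) (hq : 1 ≤ q)
    (hloop : ∀ x : ℝ, (F^[q] (x, g x)).1 = x + p) :
    ∀ x r : ℝ, r ≠ g x → (F^[q] (x, r)).1 ≠ x + p := by
  have htw : ∀ x x', D12 H x x' < 0 := fun x x' => (htwist x x').trans_lt (neg_lt_zero.2 hρ)
  have hfq : ∀ x, (graphMap F g)^[q] x = x + p := fun x => by
    rw [← hloop x, iterate_apply_graph hinv.mapsTo]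
  obtain ⟨n, rfl⟩ := Nat.exists_eq_add_of_le' hq
  have hsurj : Surjective (graphMap F g) :=
    Surjective.of_iterate_add_one fun y => ⟨y - p, by rw [hfq, sub_add_cancel]⟩
  intro x r hr hx
  have hcmp := cmp_graphMap_iterate hH hFdef htw hinv.mapsTo (graphMap_strictMono hc0 hexp)
    hsurj (x, r) n
  rw [hfq, hx, cmp_self_eq_eq, eq_comm, cmp_eq_eq_iff] at hcmp
  exact hr hcmp.symm

/-- Uniqueness of `(p, q)`-loops: if the invariant graph of `g` consists of `(p, q)`-loop
points (`π₁F^q(x, g(x)) = x + p` for all `x`), then for every `(x, r)` with `r ≠ g(x)` one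
has `π₁F^q(x, r) ≠ x + p`; i.e. for each `x` the unique solution of
`π₁F^q(x, r) = x + p` is `r = g(x)`. -/
theorem stmt9 (H : ℝ → ℝ → ℝ) (ρ : ℝ) (F : ℝ × ℝ → ℝ × ℝ)
    (hH : ContDiff ℝ 2 (Function.uncurry H))
    (hper : ∀ x x', H (x + 1) (x' + 1) = H x x')
    (hρ : 0 < ρ) (htwist : ∀ x x', D12 H x x' ≤ -ρ)
    (hFbij : Function.Bijective F)
    (hFdef : ∀ x r x' r', F (x, r) = (x', r') ↔ (r = -D1 H x x' ∧ r' = D2 H x x'))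
    (g : ℝ → ℝ) (hg : Continuous g) (hgper : ∀ x, g (x + 1) = g x)
    (hinv : Set.BijOn F {p : ℝ × ℝ | p.2 = g p.1} {p : ℝ × ℝ | p.2 = g p.1})
    (τ : ℝ) (hτ : 0 < τ)
    (huniftwist : ∀ x r₁ r₂ : ℝ, r₁ ≤ r₂ → τ * (r₂ - r₁) ≤ (F (x, r₂)).1 - (F (x, r₁)).1)
    (c : ℝ) (hc0 : 0 < c) (hc1 : c ≤ 1)
    (hexp : ∀ x y : ℝ, x ≤ y → c * (y - x) ≤ (F (y, g y)).1 - (F (x, g x)).1)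
    (p : ℤ) (q : ℕ) (hq : 1 ≤ q)
    (hloop : ∀ x : ℝ, (F^[q] (x, g x)).1 = x + p) :
    ∀ x r : ℝ, r ≠ g x → (F^[q] (x, r)).1 ≠ x + p :=
  stmt9_general H ρ F hH hρ htwist hFdef g hinv c hc0 hexp p q hq hloop
end

section
/- For all κ₁ ≥ κ₀ > 0 there exists C > 1, depending only on κ₀ and κ₁, such that the following holds. Let γ : ℝ → ℝ² be C² with γ(s + 1) = γ(s) and ‖γ'(s)‖ = 1 for all s, with curvature κ(s) := det(γ'(s), γ''(s)) satisfying κ₀ ≤ κ(s) ≤ κ₁ for all s and ∫₀¹ κ(s) ds = 2π. Then for all s₁, s₂ ∈ ℝ with s₂ - s₁ ∉ ℤ, C⁻¹·dist_𝕋(s₁, s₂)·‖γ(s₂) - γ(s₁)‖ ≤ |det(γ'(s₁), γ(s₂) - γ(s₁))| ≤ C·dist_𝕋(s₁, s₂)·‖γ(s₂) - γ(s₁)‖; that is, the sine of the angle between the tangent γ'(s₁) and the chord γ(s₂) - γ(s₁) is comparable to dist_𝕋(s₁, s₂). -/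
open Real

/-- Distance on the circle `ℝ/ℤ`: `dist_𝕋(s₁, s₂) = min_{n ∈ ℤ} |s₂ - s₁ - n|`. -/
noncomputable def distT (s₁ s₂ : ℝ) : ℝ := ⨅ n : ℤ, |s₂ - s₁ - (n : ℝ)|

/-- The (signed) curvature `κ(s) = det(γ'(s), γ''(s))` of a unit-speed plane curve. -/
noncomputable def curv (γ : ℝ → EuclideanSpace ℝ (Fin 2)) (s : ℝ) : ℝ :=
  deriv γ s 0 * deriv (deriv γ) s 1 - deriv γ s 1 * deriv (deriv γ) s 0

/-!
Write the unit tangent as `e^{iθ}` with `θ' = κ`. In the frame of the tangent at `s₁`, the chord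
from `γ(s₁)` to `γ(s₁ + v)` is `Z(v) = ∫₀^v e^{iΘ(t)} dt` with `Θ(t) = θ(s₁ + t) - θ(s₁)`, so the
determinant to be estimated is `Im Z(u)` and the chord length is `|Z(u)|`, where
`u = fract (s₂ - s₁)`. Since `κ₀ t ≤ Θ(t) ≤ κ₁ t`, as long as `Θ ≤ π` the integrand `sin Θ` is
nonnegative and comparable to `t` near `0`, which gives `Im Z(v) ≍ v²` and `|Z(v)| ≍ v`. The
reflection `Θ ↦ 2π - Θ(1 - ·)`, under which `Z ↦ -conj Z(1 - ·)`, handles `Θ(u) ≥ π` with `1 - u`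
in place of `u`. Thus `Im Z(u) ≍ m²` and `|Z(u)| ≍ m` for `m = dist_𝕋(s₁, s₂)`.
-/

open Complex (I)
open ComplexConjugate

lemma distT_eq_min_fract (s₁ s₂ : ℝ) :
    distT s₁ s₂ = min (Int.fract (s₂ - s₁)) (1 - Int.fract (s₂ - s₁)) := by
  rw [← abs_sub_round_eq_min]
  refine le_antisymm (ciInf_le ⟨0, ?_⟩ (round (s₂ - s₁))) (le_ciInf fun n => round_le _ n)
  rintro _ ⟨n, rfl⟩
  exact abs_nonneg _

noncomputable def chord (Θ : ℝ → ℝ) (v : ℝ) : ℂ := ∫ t in (0 : ℝ)..v, Complex.exp (Θ t * I)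

section chord

variable {Θ : ℝ → ℝ}

lemma norm_chord_le {v : ℝ} (hv : 0 ≤ v) : ‖chord Θ v‖ ≤ v := by
  simpa [chord, abs_of_nonneg hv] using intervalIntegral.norm_integral_le_of_norm_le_const
    (a := 0) (b := v) (C := 1) fun t _ => (Complex.norm_exp_ofReal_mul_I (Θ t)).le

lemma re_chord (hΘ : Continuous Θ) (v : ℝ) :
    (chord Θ v).re = ∫ t in (0 : ℝ)..v, Real.cos (Θ t) := by
  rw [chord, ← Complex.reCLM_apply, ← ContinuousLinearMap.intervalIntegral_comp_comm _
    (Continuous.intervalIntegrable (by fun_prop) _ _)]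
  simp [Complex.exp_ofReal_mul_I_re]

lemma im_chord (hΘ : Continuous Θ) (v : ℝ) :
    (chord Θ v).im = ∫ t in (0 : ℝ)..v, Real.sin (Θ t) := by
  rw [chord, ← Complex.imCLM_apply, ← ContinuousLinearMap.intervalIntegral_comp_comm _
    (Continuous.intervalIntegrable (by fun_prop) _ _)]
  simp [Complex.exp_ofReal_mul_I_im]

end chord

/-- The angle turned by the unit tangent of a closed curve of length `1` with curvature in
`[κ₀, κ₁]`, measured from a base point; `chord Θ v` is then the chord to the point at arclength
`v`, in the frame of the tangent at the base point. -/
structure IsTurningAngle (κ₀ κ₁ : ℝ) (Θ : ℝ → ℝ) : Prop where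
  map_zero : Θ 0 = 0
  map_one : Θ 1 = 2 * π
  mul_le_sub ⦃a b : ℝ⦄ : a ≤ b → κ₀ * (b - a) ≤ Θ b - Θ a
  sub_le_mul ⦃a b : ℝ⦄ : a ≤ b → Θ b - Θ a ≤ κ₁ * (b - a)
  chord_one : chord Θ 1 = 0

/-- Jordan's inequality bounds `∫₀^b sin Θ` below by `κ₀ / π * b ^ 2`, here for `b = π / (3 κ₁)`,
an arclength over which the tangent turns by at most `π / 3`. -/
noncomputable def chordLowerConst (κ₀ κ₁ : ℝ) : ℝ := κ₀ / π * (π / (3 * κ₁)) ^ 2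

namespace IsTurningAngle

variable {κ₀ κ₁ : ℝ} {Θ : ℝ → ℝ}

lemma le_two_pi (h : IsTurningAngle κ₀ κ₁ Θ) : κ₀ ≤ 2 * π := by
  simpa [h.map_zero, h.map_one] using h.mul_le_sub zero_le_one

lemma two_pi_le (h : IsTurningAngle κ₀ κ₁ Θ) : 2 * π ≤ κ₁ := by
  simpa [h.map_zero, h.map_one] using h.sub_le_mul zero_le_one

lemma mul_le (h : IsTurningAngle κ₀ κ₁ Θ) {t : ℝ} (ht : 0 ≤ t) : κ₀ * t ≤ Θ t := by
  simpa [h.map_zero] using h.mul_le_sub ht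

lemma le_mul (h : IsTurningAngle κ₀ κ₁ Θ) {t : ℝ} (ht : 0 ≤ t) : Θ t ≤ κ₁ * t := by
  simpa [h.map_zero] using h.sub_le_mul ht

lemma nonneg (h : IsTurningAngle κ₀ κ₁ Θ) (hκ₀ : 0 ≤ κ₀) {t : ℝ} (ht : 0 ≤ t) : 0 ≤ Θ t :=
  (mul_nonneg hκ₀ ht).trans (h.mul_le ht)

lemma monotone (h : IsTurningAngle κ₀ κ₁ Θ) (hκ₀ : 0 ≤ κ₀) : Monotone Θ := fun a b hab => by
  linarith [h.mul_le_sub hab, mul_nonneg hκ₀ (sub_nonneg.2 hab)]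

lemma continuous (h : IsTurningAngle κ₀ κ₁ Θ) (hκ₀ : 0 ≤ κ₀) : Continuous Θ := by
  refine (LipschitzWith.of_le_add_mul' κ₁ fun x y => ?_).continuous
  have hκ₁ : 0 ≤ κ₁ := le_trans (by positivity) h.two_pi_le
  rcases le_total x y with hxy | hyx
  · linarith [h.monotone hκ₀ hxy, mul_nonneg hκ₁ (dist_nonneg (x := x) (y := y))]
  · rw [Real.dist_eq, abs_of_nonneg (sub_nonneg.2 hyx)]
    linarith [h.sub_le_mul hyx]

lemma im_chord_le (h : IsTurningAngle κ₀ κ₁ Θ) (hκ₀ : 0 ≤ κ₀) {v : ℝ} (hv : 0 ≤ v) :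
    (chord Θ v).im ≤ κ₁ / 2 * v ^ 2 := by
  have hc := h.continuous hκ₀
  rw [im_chord hc]
  calc ∫ t in (0 : ℝ)..v, Real.sin (Θ t) ≤ ∫ t in (0 : ℝ)..v, κ₁ * t :=
        intervalIntegral.integral_mono_on hv (Continuous.intervalIntegrable (by fun_prop) _ _)
          (Continuous.intervalIntegrable (by fun_prop) _ _)
          fun t ht => (Real.sin_le (h.nonneg hκ₀ ht.1)).trans (h.le_mul ht.1)
    _ = κ₁ / 2 * v ^ 2 := by rw [intervalIntegral.integral_const_mul, integral_id]; ring

lemma mul_sq_le_im_chord (h : IsTurningAngle κ₀ κ₁ Θ) (hκ₀ : 0 ≤ κ₀) {w : ℝ} (hw : 0 ≤ w)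
    (hΘw : Θ w ≤ π / 2) : κ₀ / π * w ^ 2 ≤ (chord Θ w).im := by
  have hc := h.continuous hκ₀
  rw [im_chord hc]
  calc κ₀ / π * w ^ 2 = ∫ t in (0 : ℝ)..w, 2 / π * (κ₀ * t) := by
        rw [intervalIntegral.integral_const_mul, intervalIntegral.integral_const_mul, integral_id]
        field_simp
        ring
    _ ≤ ∫ t in (0 : ℝ)..w, Real.sin (Θ t) :=
        intervalIntegral.integral_mono_on hw (Continuous.intervalIntegrable (by fun_prop) _ _)
          (Continuous.intervalIntegrable (by fun_prop) _ _) fun t ht =>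
          (mul_le_mul_of_nonneg_left (h.mul_le ht.1) (by positivity)).trans
            (Real.mul_le_sin (h.nonneg hκ₀ ht.1) ((h.monotone hκ₀ ht.2).trans hΘw))

lemma im_chord_le_im_chord (h : IsTurningAngle κ₀ κ₁ Θ) (hκ₀ : 0 ≤ κ₀) {w v : ℝ} (hw : 0 ≤ w)
    (hwv : w ≤ v) (hΘv : Θ v ≤ π) : (chord Θ w).im ≤ (chord Θ v).im := by
  have hc := h.continuous hκ₀
  have hi : ∀ a b : ℝ, IntervalIntegrable (fun t => Real.sin (Θ t)) MeasureTheory.volume a b :=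
    fun a b => Continuous.intervalIntegrable (by fun_prop) _ _
  rw [im_chord hc, im_chord hc,
    ← intervalIntegral.integral_add_adjacent_intervals (hi 0 w) (hi w v)]
  refine le_add_of_nonneg_right (intervalIntegral.integral_nonneg hwv fun t ht => ?_)
  exact Real.sin_nonneg_of_nonneg_of_le_pi (h.nonneg hκ₀ (hw.trans ht.1))
    ((h.monotone hκ₀ ht.2).trans hΘv)

lemma half_le_re_chord (h : IsTurningAngle κ₀ κ₁ Θ) (hκ₀ : 0 ≤ κ₀) {v : ℝ} (hv : 0 ≤ v)
    (hΘv : Θ v ≤ π / 3) : v / 2 ≤ (chord Θ v).re := by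
  have hc := h.continuous hκ₀
  rw [re_chord hc]
  calc v / 2 = ∫ _ in (0 : ℝ)..v, (1 / 2 : ℝ) := by
        rw [intervalIntegral.integral_const, smul_eq_mul]; ring
    _ ≤ ∫ t in (0 : ℝ)..v, Real.cos (Θ t) :=
        intervalIntegral.integral_mono_on hv intervalIntegrable_const
          (Continuous.intervalIntegrable (by fun_prop) _ _) fun t ht => by
          rw [← Real.cos_pi_div_three]
          exact Real.cos_le_cos_of_nonneg_of_le_pi (h.nonneg hκ₀ ht.1)
            (by linarith [Real.pi_pos]) ((h.monotone hκ₀ ht.2).trans hΘv)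

lemma le_pi_div_three (h : IsTurningAngle κ₀ κ₁ Θ) {t : ℝ} (ht : 0 ≤ t)
    (htb : t ≤ π / (3 * κ₁)) : Θ t ≤ π / 3 := by
  have hκ₁ : 0 < κ₁ := by linarith [h.two_pi_le, Real.pi_pos]
  calc Θ t ≤ κ₁ * t := h.le_mul ht
    _ ≤ κ₁ * (π / (3 * κ₁)) := by gcongr
    _ = π / 3 := by field_simp

lemma chordLowerConst_mul_le_of_le_pi (h : IsTurningAngle κ₀ κ₁ Θ) (hκ₀ : 0 ≤ κ₀) {v : ℝ}
    (hv0 : 0 ≤ v) (hv1 : v ≤ 1) (hΘv : Θ v ≤ π) :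
    chordLowerConst κ₀ κ₁ * v ^ 2 ≤ (chord Θ v).im ∧ chordLowerConst κ₀ κ₁ * v ≤ ‖chord Θ v‖ := by
  have hπ := Real.pi_pos
  have hκ₁ : 2 * π ≤ κ₁ := h.two_pi_le
  have hκ₁0 : 0 < κ₁ := by linarith
  set b := π / (3 * κ₁)
  have hb : 0 < b := by positivity
  have hb6 : b ≤ 1 / 6 := by
    rw [div_le_iff₀ (by positivity)]; linarith
  set w := min v b
  have hw : 0 ≤ w := le_min hv0 hb.le
  have him : κ₀ / π * w ^ 2 ≤ (chord Θ v).im :=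
    (h.mul_sq_le_im_chord hκ₀ hw
      ((h.le_pi_div_three hw (min_le_right _ _)).trans (by linarith))).trans
      (h.im_chord_le_im_chord hκ₀ hw (min_le_left _ _) hΘv)
  have hc : chordLowerConst κ₀ κ₁ = κ₀ / π * b ^ 2 := rfl
  constructor
  · have hbv : b * v ≤ w := le_min (by nlinarith) (by nlinarith)
    calc chordLowerConst κ₀ κ₁ * v ^ 2 = κ₀ / π * (b * v) ^ 2 := by rw [hc]; ring
      _ ≤ κ₀ / π * w ^ 2 := by gcongr
      _ ≤ (chord Θ v).im := him
  · rcases le_total v b with hvb | hbv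
    · have hc2 : chordLowerConst κ₀ κ₁ ≤ 1 / 2 := by
        have : κ₀ / π ≤ 2 := by rw [div_le_iff₀ hπ]; linarith [h.le_two_pi]
        rw [hc]; nlinarith
      calc chordLowerConst κ₀ κ₁ * v ≤ v / 2 := by nlinarith
        _ ≤ (chord Θ v).re := h.half_le_re_chord hκ₀ hv0 (h.le_pi_div_three hv0 hvb)
        _ ≤ ‖chord Θ v‖ := Complex.re_le_norm _
    · have hwb : w = b := min_eq_right hbv
      calc chordLowerConst κ₀ κ₁ * v ≤ chordLowerConst κ₀ κ₁ := by
            rw [hc]; exact mul_le_of_le_one_right (by positivity) hv1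
        _ ≤ (chord Θ v).im := by rw [hc, ← hwb]; exact him
        _ ≤ ‖chord Θ v‖ := Complex.im_le_norm _

lemma chord_reflect (h : IsTurningAngle κ₀ κ₁ Θ) (hκ₀ : 0 ≤ κ₀) (v : ℝ) :
    chord (fun t => 2 * π - Θ (1 - t)) v = -conj (chord Θ (1 - v)) := by
  have hΘc := h.continuous hκ₀
  have hi : ∀ a b : ℝ,
      IntervalIntegrable (fun t => Complex.exp (Θ t * I)) MeasureTheory.volume a b :=
    fun a b => Continuous.intervalIntegrable (by fun_prop) _ _
  have hexp : ∀ t : ℝ, Complex.exp (((2 * π - Θ (1 - t) : ℝ) : ℂ) * I)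
      = conj (Complex.exp (Θ (1 - t) * I)) := fun t => by
    rw [← Complex.exp_conj, map_mul, Complex.conj_ofReal, Complex.conj_I,
      show (((2 * π - Θ (1 - t) : ℝ) : ℂ) * I) = 2 * π * I + Θ (1 - t) * -I by push_cast; ring,
      Complex.exp_add, Complex.exp_two_pi_mul_I, one_mul]
  simp only [chord, hexp]
  rw [intervalIntegral.intervalIntegral_conj,
    intervalIntegral.integral_comp_sub_left (fun t => Complex.exp (Θ t * I)), sub_zero,
    ← intervalIntegral.integral_interval_sub_left (hi 0 1) (hi 0 (1 - v))]
  have h1 := h.chord_one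
  rw [chord] at h1
  rw [h1, zero_sub, map_neg]

lemma reflect (h : IsTurningAngle κ₀ κ₁ Θ) (hκ₀ : 0 ≤ κ₀) :
    IsTurningAngle κ₀ κ₁ (fun t => 2 * π - Θ (1 - t)) where
  map_zero := by simp [h.map_one]
  map_one := by simp [h.map_zero]
  mul_le_sub a b hab := by
    have := h.mul_le_sub (sub_le_sub_left hab 1)
    simp only [sub_sub_sub_cancel_left] at this ⊢
    linarith
  sub_le_mul a b hab := by
    have := h.sub_le_mul (sub_le_sub_left hab 1)
    simp only [sub_sub_sub_cancel_left] at this ⊢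
    linarith
  chord_one := by
    rw [h.chord_reflect hκ₀, sub_self, chord, intervalIntegral.integral_same, _root_.map_zero,
      neg_zero]

theorem chord_bounds (h : IsTurningAngle κ₀ κ₁ Θ) (hκ₀ : 0 ≤ κ₀) {u : ℝ} (hu0 : 0 < u)
    (hu1 : u < 1) :
    chordLowerConst κ₀ κ₁ * min u (1 - u) ^ 2 ≤ (chord Θ u).im ∧
      (chord Θ u).im ≤ κ₁ / 2 * min u (1 - u) ^ 2 ∧
      chordLowerConst κ₀ κ₁ * min u (1 - u) ≤ ‖chord Θ u‖ ∧ ‖chord Θ u‖ ≤ min u (1 - u) := by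
  have hr := h.reflect hκ₀
  have hrc : chord (fun t => 2 * π - Θ (1 - t)) (1 - u) = -conj (chord Θ u) := by
    rw [h.chord_reflect hκ₀, sub_sub_cancel]
  have him : (chord Θ u).im = (chord (fun t => 2 * π - Θ (1 - t)) (1 - u)).im := by
    rw [hrc]; simp
  have hnorm : ‖chord Θ u‖ = ‖chord (fun t => 2 * π - Θ (1 - t)) (1 - u)‖ := by
    rw [hrc, norm_neg, Complex.norm_conj]
  have hc : 0 ≤ chordLowerConst κ₀ κ₁ := by
    have := h.two_pi_le; unfold chordLowerConst; positivity
  have hm0 : 0 ≤ min u (1 - u) := le_min hu0.le (by linarith)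
  have hmu : min u (1 - u) ≤ u := min_le_left _ _
  have hm1u : min u (1 - u) ≤ 1 - u := min_le_right _ _
  have lower : chordLowerConst κ₀ κ₁ * min u (1 - u) ^ 2 ≤ (chord Θ u).im ∧
      chordLowerConst κ₀ κ₁ * min u (1 - u) ≤ ‖chord Θ u‖ := by
    rcases le_total (Θ u) π with hΘu | hΘu
    · obtain ⟨h1, h2⟩ := h.chordLowerConst_mul_le_of_le_pi hκ₀ hu0.le hu1.le hΘu
      exact ⟨le_trans (by gcongr) h1, le_trans (by gcongr) h2⟩
    · obtain ⟨h1, h2⟩ := hr.chordLowerConst_mul_le_of_le_pi hκ₀ (v := 1 - u) (by linarith)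
        (by linarith) (by simp only [sub_sub_cancel]; linarith)
      rw [him, hnorm]
      exact ⟨le_trans (by gcongr) h1, le_trans (by gcongr) h2⟩
  refine ⟨lower.1, ?_, lower.2, ?_⟩
  · rcases min_choice u (1 - u) with hm | hm <;> rw [hm]
    · exact h.im_chord_le hκ₀ hu0.le
    · rw [him]; exact hr.im_chord_le hκ₀ (by linarith)
  · rcases min_choice u (1 - u) with hm | hm <;> rw [hm]
    · exact norm_chord_le hu0.le
    · rw [hnorm]; exact norm_chord_le (by linarith)

end IsTurningAngle

lemma eq_mul_exp_integral_of_hasDerivAt {z : ℝ → ℂ} {κ : ℝ → ℝ} (hκ : Continuous κ)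
    (hz : ∀ t, HasDerivAt z (κ t * I * z t) t) (a t : ℝ) :
    z t = z a * Complex.exp ((∫ s in a..t, κ s) * I) := by
  set Φ : ℝ → ℂ := fun t => (∫ s in a..t, κ s : ℝ) * I
  have hΦ : ∀ t, HasDerivAt Φ (κ t * I) t := fun t =>
    (hκ.integral_hasStrictDerivAt a t).hasDerivAt.ofReal_comp.mul_const I
  have hconst : ∀ t, HasDerivAt (fun t => z t * Complex.exp (-Φ t)) 0 t := fun t =>
    ((hz t).fun_mul (hΦ t).fun_neg.cexp).congr_deriv (by ring)
  have key := is_const_of_deriv_eq_zero (fun t => (hconst t).differentiableAt)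
    (fun t => (hconst t).deriv) t a
  simp only [Φ, intervalIntegral.integral_same, Complex.ofReal_zero, zero_mul, neg_zero,
    Complex.exp_zero, mul_one] at key
  rw [← key, mul_assoc, ← Complex.exp_add, neg_add_cancel, Complex.exp_zero, mul_one]

/-- Differentiating `‖z‖² = 1` shows that `conj z * z'` is purely imaginary. -/
lemma HasDerivAt.eq_im_conj_mul_mul_I_mul {z : ℝ → ℂ} {z' : ℂ} {t : ℝ} (hz : HasDerivAt z z' t)
    (hunit : ∀ s, ‖z s‖ = 1) : z' = (conj (z t) * z').im * I * z t := by
  have hsq : HasDerivAt (fun s => ‖z s‖ ^ 2) 0 t := by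
    simp only [hunit, one_pow]; exact hasDerivAt_const t 1
  have hre : (conj (z t) * z').re = 0 := by
    have := hz.norm_sq.unique hsq
    rw [Complex.inner, mul_comm z'] at this
    linarith
  have hzz : conj (z t) * z t = 1 := by
    rw [Complex.conj_mul', hunit]; norm_num
  have him : conj (z t) * z' = (conj (z t) * z').im * I :=
    Complex.ext (by simp [hre]) (by simp)
  linear_combination (-z') * hzz + z t * him

lemma Function.Periodic.deriv {E : Type*} [NormedAddCommGroup E] [NormedSpace ℝ E] {f : ℝ → E}
    {c : ℝ} (h : Function.Periodic f c) : Function.Periodic (deriv f) c := fun x => by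
  rw [← deriv_comp_add_const, show (fun y => f (y + c)) = f from funext h]

local notation "toℂ" => Complex.orthonormalBasisOneI.repr.symm

lemma det_eq_im_conj_mul (x y : EuclideanSpace ℝ (Fin 2)) :
    x 0 * y 1 - x 1 * y 0 = (conj (toℂ x) * toℂ y).im := by
  simp [Complex.orthonormalBasisOneI_repr_symm_apply, mul_comm, sub_eq_add_neg]

lemma HasDerivAt.toComplex {f : ℝ → EuclideanSpace ℝ (Fin 2)} {f' : EuclideanSpace ℝ (Fin 2)}
    {t : ℝ} (hf : HasDerivAt f f' t) : HasDerivAt (fun s => toℂ (f s)) (toℂ f') t :=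
  (toℂ).toContinuousLinearEquiv.hasFDerivAt.comp_hasDerivAt t hf

noncomputable def turningAngle (γ : ℝ → EuclideanSpace ℝ (Fin 2)) (a t : ℝ) : ℝ :=
  ∫ s in a..a + t, curv γ s

section PlaneCurve

variable {γ : ℝ → EuclideanSpace ℝ (Fin 2)}

lemma continuous_curv (hγ : ContDiff ℝ 2 γ) : Continuous (curv γ) := by
  have hd : ContDiff ℝ 1 (deriv γ) := hγ.deriv'
  have hd₀ := hd.continuous
  have hd₁ := hd.continuous_deriv le_rfl
  unfold curv
  fun_prop

lemma periodic_curv (hper : Function.Periodic γ 1) : Function.Periodic (curv γ) 1 := fun s => by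
  simp only [curv, hper.deriv s, hper.deriv.deriv s]

lemma hasDerivAt_toComplex_deriv (hγ : ContDiff ℝ 2 γ) (hunit : ∀ s, ‖deriv γ s‖ = 1) (t : ℝ) :
    HasDerivAt (fun s => toℂ (deriv γ s)) (curv γ t * I * toℂ (deriv γ t)) t := by
  have hd := ((hγ.deriv' (n := 1)).differentiable one_ne_zero t).hasDerivAt.toComplex
  rwa [curv, det_eq_im_conj_mul,
    ← hd.eq_im_conj_mul_mul_I_mul fun s => by rw [LinearIsometryEquiv.norm_map, hunit]]

lemma toComplex_deriv_eq_mul_exp (hγ : ContDiff ℝ 2 γ) (hunit : ∀ s, ‖deriv γ s‖ = 1) (a t : ℝ) :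
    toℂ (deriv γ (a + t)) = toℂ (deriv γ a) * Complex.exp (turningAngle γ a t * I) :=
  eq_mul_exp_integral_of_hasDerivAt (continuous_curv hγ) (hasDerivAt_toComplex_deriv hγ hunit) a _

lemma toComplex_sub_eq_mul_chord (hγ : ContDiff ℝ 2 γ) (hunit : ∀ s, ‖deriv γ s‖ = 1) (a v : ℝ) :
    toℂ (γ (a + v) - γ a) = toℂ (deriv γ a) * chord (turningAngle γ a) v := by
  have hderiv : ∀ t, HasDerivAt (fun t => toℂ (γ (a + t))) (toℂ (deriv γ (a + t))) t := fun t =>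
    ((hγ.differentiable two_ne_zero (a + t)).hasDerivAt.comp_const_add a t).toComplex
  have hcont : Continuous fun t => toℂ (deriv γ (a + t)) := by
    have := hγ.continuous_deriv one_le_two
    fun_prop
  have hftc : ∫ t in (0 : ℝ)..v, toℂ (deriv γ (a + t)) = toℂ (γ (a + v)) - toℂ (γ (a + 0)) :=
    intervalIntegral.integral_eq_sub_of_hasDerivAt (fun t _ => hderiv t)
      (hcont.intervalIntegrable _ _)
  rw [chord, ← intervalIntegral.integral_const_mul]
  simp_rw [← toComplex_deriv_eq_mul_exp hγ hunit]
  rw [hftc, add_zero, map_sub]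

lemma isTurningAngle_turningAngle {κ₀ κ₁ : ℝ} (hγ : ContDiff ℝ 2 γ) (hper : Function.Periodic γ 1)
    (hunit : ∀ s, ‖deriv γ s‖ = 1) (hκ₀ : ∀ s, κ₀ ≤ curv γ s) (hκ₁ : ∀ s, curv γ s ≤ κ₁)
    (htot : ∫ s in (0 : ℝ)..1, curv γ s = 2 * π) (a : ℝ) :
    IsTurningAngle κ₀ κ₁ (turningAngle γ a) := by
  have hi : ∀ b c : ℝ, IntervalIntegrable (curv γ) MeasureTheory.volume b c :=
    fun b c => (continuous_curv hγ).intervalIntegrable b c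
  have hsub : ∀ b c, turningAngle γ a c - turningAngle γ a b = ∫ s in a + b..a + c, curv γ s :=
    fun b c => intervalIntegral.integral_interval_sub_left (hi _ _) (hi _ _)
  refine ⟨by simp [turningAngle], ?_, fun b c hbc => ?_, fun b c hbc => ?_, ?_⟩
  · rw [turningAngle, (periodic_curv hper).intervalIntegral_add_eq a 0, zero_add, htot]
  · rw [hsub]
    convert intervalIntegral.integral_mono_on (by linarith : a + b ≤ a + c)
      intervalIntegrable_const (hi _ _) fun s _ => hκ₀ s using 1
    simp only [intervalIntegral.integral_const, smul_eq_mul]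
    ring
  · rw [hsub]
    convert intervalIntegral.integral_mono_on (by linarith : a + b ≤ a + c)
      (hi _ _) intervalIntegrable_const fun s _ => hκ₁ s using 1
    simp only [intervalIntegral.integral_const, smul_eq_mul]
    ring
  · have h := toComplex_sub_eq_mul_chord hγ hunit a 1
    rw [hper a, sub_self, map_zero] at h
    refine (mul_eq_zero.1 h.symm).resolve_left fun h0 => ?_
    have := hunit a
    rw [← LinearIsometryEquiv.norm_map toℂ, h0, norm_zero] at this
    exact zero_ne_one this

lemma det_deriv_sub_eq_im_chord (hγ : ContDiff ℝ 2 γ) (hunit : ∀ s, ‖deriv γ s‖ = 1) (a v : ℝ) :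
    deriv γ a 0 * (γ (a + v) - γ a) 1 - deriv γ a 1 * (γ (a + v) - γ a) 0
      = (chord (turningAngle γ a) v).im := by
  rw [det_eq_im_conj_mul, toComplex_sub_eq_mul_chord hγ hunit, ← mul_assoc, Complex.conj_mul',
    LinearIsometryEquiv.norm_map, hunit]
  simp

lemma norm_sub_eq_norm_chord (hγ : ContDiff ℝ 2 γ) (hunit : ∀ s, ‖deriv γ s‖ = 1) (a v : ℝ) :
    ‖γ (a + v) - γ a‖ = ‖chord (turningAngle γ a) v‖ := by
  rw [← LinearIsometryEquiv.norm_map toℂ, toComplex_sub_eq_mul_chord hγ hunit, norm_mul,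
    LinearIsometryEquiv.norm_map, hunit, one_mul]

end PlaneCurve

lemma comparable_of_sq_bounds {c K C m R T : ℝ} (hc : 0 < c) (hC : 0 < C) (hCc : C⁻¹ ≤ c)
    (hKC : K ≤ C * c) (hm : 0 ≤ m) (hT₀ : c * m ^ 2 ≤ T) (hT₁ : T ≤ K * m ^ 2)
    (hR₀ : c * m ≤ R) (hR₁ : R ≤ m) :
    C⁻¹ * (m * R) ≤ |T| ∧ |T| ≤ C * (m * R) := by
  rw [abs_of_nonneg ((by positivity : 0 ≤ c * m ^ 2).trans hT₀)]
  have hR : 0 ≤ R := (by positivity : 0 ≤ c * m).trans hR₀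
  constructor
  · calc C⁻¹ * (m * R) ≤ c * (m * m) := by gcongr
      _ ≤ T := by nlinarith
  · calc T ≤ C * c * m ^ 2 := hT₁.trans (by gcongr)
      _ = C * (m * (c * m)) := by ring
      _ ≤ C * (m * R) := by gcongr

/-- Angle estimate: for a unit-speed `1`-periodic `C²` plane curve with curvature pinched
in `[κ₀, κ₁]` and total curvature `2π`, and `s₂ - s₁ ∉ ℤ`, the quantity
`|det(γ'(s₁), γ(s₂) - γ(s₁))|` (which is `sin` of the tangent–chord angle times the chord
length) is comparable to `dist_𝕋(s₁, s₂)·‖γ(s₂) - γ(s₁)‖`, with constant depending only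
on `κ₀, κ₁`. -/
theorem stmt12 (κ₀ κ₁ : ℝ) (h0 : 0 < κ₀) (h01 : κ₀ ≤ κ₁) :
    ∃ C : ℝ, 1 < C ∧
      ∀ γ : ℝ → EuclideanSpace ℝ (Fin 2),
        ContDiff ℝ 2 γ → (∀ s, γ (s + 1) = γ s) → (∀ s, ‖deriv γ s‖ = 1) →
        (∀ s, κ₀ ≤ curv γ s) → (∀ s, curv γ s ≤ κ₁) →
        (∫ s in (0:ℝ)..1, curv γ s) = 2 * π →
        ∀ s₁ s₂ : ℝ, (¬ ∃ n : ℤ, s₂ - s₁ = (n : ℝ)) →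
          C⁻¹ * (distT s₁ s₂ * ‖γ s₂ - γ s₁‖)
              ≤ |deriv γ s₁ 0 * (γ s₂ - γ s₁) 1 - deriv γ s₁ 1 * (γ s₂ - γ s₁) 0| ∧
            |deriv γ s₁ 0 * (γ s₂ - γ s₁) 1 - deriv γ s₁ 1 * (γ s₂ - γ s₁) 0|
              ≤ C * (distT s₁ s₂ * ‖γ s₂ - γ s₁‖) := by
  have hκ₁ : 0 < κ₁ := h0.trans_le h01
  set c := chordLowerConst κ₀ κ₁
  have hc : 0 < c := by unfold c chordLowerConst; positivity
  refine ⟨(1 + κ₁) / c + 1, by linarith [(by positivity : 0 < (1 + κ₁) / c)], ?_⟩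
  intro γ hγ hper hunit hlo hhi htot s₁ s₂ hs
  set u := Int.fract (s₂ - s₁)
  have hu0 : 0 < u := Int.fract_pos.2 fun h => hs ⟨_, h⟩
  have hu1 : u < 1 := Int.fract_lt_one _
  have hγs₂ : γ s₂ = γ (s₁ + u) := by
    rw [← Function.Periodic.int_mul hper ⌊s₂ - s₁⌋ (s₁ + u), mul_one, add_assoc,
      Int.fract_add_floor, add_sub_cancel]
  rw [distT_eq_min_fract, hγs₂, det_deriv_sub_eq_im_chord hγ hunit,
    norm_sub_eq_norm_chord hγ hunit]
  obtain ⟨hT₀, hT₁, hR₀, hR₁⟩ :=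
    (isTurningAngle_turningAngle hγ hper hunit hlo hhi htot s₁).chord_bounds h0.le hu0 hu1
  refine comparable_of_sq_bounds hc (by positivity) (inv_le_of_inv_le₀ hc ?_) ?_
    (le_min hu0.le (by linarith)) hT₀ hT₁ hR₀ hR₁
  · have : 1 / c ≤ (1 + κ₁) / c := by gcongr; linarith
    rw [inv_eq_one_div]
    linarith
  · rw [add_mul, div_mul_cancel₀ _ hc.ne']
    linarith
end
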